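/- arXiv:2206.03853 — 2 statements merged into one kernel-verified Lean document; each statement's English description precedes it below -/
import Mathlib

section
/- Let f, g : ℝ → ℝ be nonnegative integrable functions on [0, ∞) with ∫₀^∞ f = ∫₀^∞ g. Suppose there exists v ≥ 0 such that for all x ≥ 0, f(v - x) ≤ g(v - x) and f(v + x) ≥ g(v + x). Then ∫₀^∞ s·f(s) ds ≥ ∫₀^∞ s·g(s) ds. -/
open MeasureTheory Set

/-- Splittable densities on `[0, ∞)` with equal mass have ordered first moments. -/
theorem stmt_0 (f g : ℝ → ℝ)
    (hf_meas : Measurable f) (hg_meas : Measurable g)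
    (hf_nonneg : ∀ s ∈ Ici (0 : ℝ), 0 ≤ f s)
    (hg_nonneg : ∀ s ∈ Ici (0 : ℝ), 0 ≤ g s)
    (hf_int : IntegrableOn f (Ici 0))
    (hg_int : IntegrableOn g (Ici 0))
    (hsf_int : IntegrableOn (fun s => s * f s) (Ici 0))
    (hsg_int : IntegrableOn (fun s => s * g s) (Ici 0))
    (h_mass : ∫ s in Ici (0 : ℝ), f s = ∫ s in Ici (0 : ℝ), g s)
    (h_split : ∃ v ≥ (0 : ℝ), ∀ x ≥ (0 : ℝ),
      f (v - x) ≤ g (v - x) ∧ f (v + x) ≥ g (v + x)) :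
    ∫ s in Ici (0 : ℝ), s * f s ≥ ∫ s in Ici (0 : ℝ), s * g s := by
  obtain ⟨v, hv, hsp⟩ := h_split
  have hpt : ∀ s ∈ Ici (0 : ℝ), 0 ≤ (s - v) * (f s - g s) := by
    intro s hs
    rcases le_total v s with h | h
    · have := (hsp (s - v) (by linarith)).2
      have hfg : g s ≤ f s := by
        have hvv : v + (s - v) = s := by ring
        rwa [hvv] at this
      exact mul_nonneg (by linarith) (by linarith)
    · have := (hsp (v - s) (by linarith)).1
      have hfg : f s ≤ g s := by
        have hvv : v - (v - s) = s := by ring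
        rwa [hvv] at this
      nlinarith
  have hint1 : IntegrableOn (fun s => s * f s - s * g s) (Ici (0:ℝ)) := hsf_int.sub hsg_int
  have hint2 : IntegrableOn (fun s => v * (f s - g s)) (Ici (0:ℝ)) :=
    ((hf_int.sub hg_int).const_mul v)
  have key : 0 ≤ ∫ s in Ici (0 : ℝ), (s - v) * (f s - g s) :=
    setIntegral_nonneg measurableSet_Ici hpt
  have heq : (fun s => (s - v) * (f s - g s))
      = fun s => (s * f s - s * g s) - v * (f s - g s) := by
    funext s; ring
  rw [heq, integral_sub hint1 hint2, integral_sub hsf_int hsg_int,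
    MeasureTheory.integral_const_mul, integral_sub hf_int hg_int, h_mass] at key
  simp at key
  linarith
end

section
/- Let S₁, …, S_m (m ≥ 2) be mutually independent nonnegative real random variables with densities, fix i, and let R_i denote the rank of S_i among S₁, …, S_m (R_i = 1 + #{j : S_j > S_i}). Then for k = 1, assuming P(R_i = 1) > 0 and P(R_i = 2) > 0 and E[S_i] < ∞, we have E[S_i | R_i = 1] ≥ E[S_i | R_i = 2]. -/
open MeasureTheory ProbabilityTheory Set
open scoped ENNReal

lemma stmt6_key_real {n : Type*} [DecidableEq n] (u : Finset n) (fs ft : n → ℝ)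
    (h0 : ∀ j, 0 ≤ fs j) (hle : ∀ j, fs j ≤ ft j) (h1 : ∀ j, ft j ≤ 1) :
    (∏ j ∈ u, fs j) * (∑ j ∈ u, (1 - ft j) * ∏ l ∈ u.erase j, ft l)
      ≤ (∏ j ∈ u, ft j) * (∑ j ∈ u, (1 - fs j) * ∏ l ∈ u.erase j, fs l) := by
  rw [Finset.mul_sum, Finset.mul_sum]
  refine Finset.sum_le_sum fun j hj => ?_
  rw [← Finset.mul_prod_erase u fs hj, ← Finset.mul_prod_erase u ft hj]
  have h0' : ∀ j, 0 ≤ ft j := fun j => le_trans (h0 j) (hle j)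
  have hPs : (0:ℝ) ≤ ∏ l ∈ u.erase j, fs l := Finset.prod_nonneg fun l _ => h0 l
  have hPt : (0:ℝ) ≤ ∏ l ∈ u.erase j, ft l := Finset.prod_nonneg fun l _ => h0' l
  have hkey : fs j * (1 - ft j) ≤ ft j * (1 - fs j) := by nlinarith [hle j, h0 j, h1 j]
  have h2 := mul_le_mul_of_nonneg_right hkey (mul_nonneg hPs hPt)
  nlinarith [h2]

lemma stmt6_cheb_real (t s gt gs ht' hs' : ℝ)
    (hk1 : s ≤ t → ht' * gs ≤ gt * hs') (hk2 : t ≤ s → hs' * gt ≤ gs * ht') :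
    t * ht' * gs + s * hs' * gt ≤ t * gt * hs' + s * gs * ht' := by
  rcases le_total s t with h | h
  · have := hk1 h
    nlinarith [mul_le_mul_of_nonneg_left this (sub_nonneg.2 h)]
  · have := hk2 h
    nlinarith [mul_le_mul_of_nonneg_left this (sub_nonneg.2 h)]

/-- Theorem 2 of the paper (case `k = 1`): for mutually independent nonnegative
scores with densities, the conditional expectation of `S i` given that it has
rank 1 is at least its conditional expectation given rank 2, where the rank of
`S i` is `1 + #{j : S j > S i}`. -/
theorem stmt_6 {Ω : Type*} [MeasurableSpace Ω] (μ : Measure Ω) [IsProbabilityMeasure μ]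
    (m : ℕ) (hm : 2 ≤ m) (S : Fin m → Ω → ℝ) (hS : ∀ j, Measurable (S j))
    (hS_nonneg : ∀ j ω, 0 ≤ S j ω)
    (h_indep : iIndepFun S μ)
    (h_pdf : ∀ j, HasPDF (S j) μ)
    (i : Fin m)
    (R : Ω → ℕ) (hR : ∀ ω, R ω = 1 + Nat.card {j : Fin m // S i ω < S j ω})
    (h_int : Integrable (S i) μ)
    (h1 : 0 < μ {ω | R ω = 1}) (h2 : 0 < μ {ω | R ω = 2}) :
    ∫ ω, S i ω ∂(μ[|{ω | R ω = 1}]) ≥ ∫ ω, S i ω ∂(μ[|{ω | R ω = 2}]) := by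
  classical
  set A := {ω | R ω = 1} with hAdef
  set B := {ω | R ω = 2} with hBdef
  set X := S i with hXdef
  set u : Finset (Fin m) := Finset.univ.erase i with hudef
  set Y : Ω → (↥u → ℝ) := fun ω j => S j.1 ω with hYdef
  have hXm : Measurable X := hS i
  have hYm : Measurable Y := measurable_pi_lambda _ fun j => hS j.1
  -- independence of X and Y
  have hXY : IndepFun X Y μ := by
    have hdisj : Disjoint ({i} : Finset (Fin m)) u := by
      simp [hudef, Finset.disjoint_left]
    have h := h_indep.indepFun_finset {i} u hdisj hS
    exact h.comp (measurable_pi_apply (⟨i, by simp⟩ : ({i} : Finset (Fin m)))) measurable_id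
  set ν : Measure ℝ := μ.map X with hνdef
  set ρ : Measure (↥u → ℝ) := μ.map Y with hρdef
  haveI : IsProbabilityMeasure ν := Measure.isProbabilityMeasure_map hXm.aemeasurable
  haveI : IsProbabilityMeasure ρ := Measure.isProbabilityMeasure_map hYm.aemeasurable
  have hmap : μ.map (fun ω => (X ω, Y ω)) = ν.prod ρ :=
    (indepFun_iff_map_prod_eq_prod_map_map hXm.aemeasurable hYm.aemeasurable).1 hXY
  -- the two events as preimages
  set PA : Set (ℝ × (↥u → ℝ)) := {p | ∀ j, p.2 j ≤ p.1} with hPAdef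
  set PB : Set (ℝ × (↥u → ℝ)) := {p | ∃! j, p.1 < p.2 j} with hPBdef
  have hPA : MeasurableSet PA := by
    have hPAeq : PA = ⋂ j, {p : ℝ × (↥u → ℝ) | p.2 j ≤ p.1} := by
      ext p; simp [hPAdef]
    rw [hPAeq]
    exact MeasurableSet.iInter fun j =>
      measurableSet_le (measurable_snd.eval) measurable_fst
  have hPB : MeasurableSet PB := by
    have hPBeq : PB = ⋃ j, ({p : ℝ × (↥u → ℝ) | p.1 < p.2 j}
        ∩ ⋂ l, {p : ℝ × (↥u → ℝ) | l = j ∨ p.2 l ≤ p.1}) := by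
      ext p
      simp only [hPBdef, mem_setOf_eq, mem_iUnion, mem_inter_iff, mem_iInter, ExistsUnique]
      constructor
      · rintro ⟨j, hj, hun⟩
        refine ⟨j, hj, fun l => ?_⟩
        rcases eq_or_ne l j with rfl | hl
        · exact Or.inl rfl
        · exact Or.inr (not_lt.1 fun hc => hl (hun l hc))
      · rintro ⟨j, hj, hl⟩
        refine ⟨j, hj, fun l hlj => ?_⟩
        rcases hl l with rfl | hle
        · rfl
        · exact absurd hlj (not_lt.2 hle)
    rw [hPBeq]
    refine MeasurableSet.iUnion fun j => MeasurableSet.inter ?_ (MeasurableSet.iInter fun l => ?_)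
    · exact measurableSet_lt measurable_fst measurable_snd.eval
    by_cases hlj : l = j
    · simp [hlj]
    · have : {p : ℝ × (↥u → ℝ) | l = j ∨ p.2 l ≤ p.1}
          = {p : ℝ × (↥u → ℝ) | p.2 l ≤ p.1} := by
        ext p; simp [hlj]
      rw [this]
      exact measurableSet_le (measurable_snd.eval) measurable_fst
  have hApre : A = (fun ω => (X ω, Y ω)) ⁻¹' PA := by
    ext ω
    simp only [hAdef, mem_setOf_eq, mem_preimage, hPAdef, hR ω, hYdef]
    rw [show (1 + Nat.card {j : Fin m // S i ω < S j ω} = 1)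
        ↔ Nat.card {j : Fin m // S i ω < S j ω} = 0 by omega,
      Nat.card_eq_zero]
    constructor
    · rintro (hemp | hinf)
      · exact fun j => not_lt.1 fun hc => hemp.elim' ⟨j.1, hc⟩
      · exact absurd hinf (Finite.not_infinite inferInstance)
    · intro hall
      refine Or.inl ⟨fun x => ?_⟩
      rcases eq_or_ne x.1 i with hxi | hxi
      · exact lt_irrefl _ (hxi ▸ x.2)
      · exact absurd x.2 (not_lt.2 (hall ⟨x.1, by simp [hudef, hxi]⟩))
  have hBpre : B = (fun ω => (X ω, Y ω)) ⁻¹' PB := by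
    ext ω
    simp only [hBdef, mem_setOf_eq, mem_preimage, hPBdef, hR ω, hYdef]
    rw [show (1 + Nat.card {j : Fin m // S i ω < S j ω} = 2)
        ↔ Nat.card {j : Fin m // S i ω < S j ω} = 1 by omega,
      Nat.card_eq_one_iff_exists]
    constructor
    · rintro ⟨⟨j0, hj0⟩, hun⟩
      have hj0i : j0 ≠ i := fun hji => lt_irrefl _ (hji ▸ hj0)
      refine ⟨⟨j0, by simp [hudef, hj0i]⟩, hj0, fun l hl => ?_⟩
      have := hun ⟨l.1, hl⟩
      exact Subtype.ext (by simpa using congrArg Subtype.val this)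
    · rintro ⟨j0, hj0, hun⟩
      refine ⟨⟨j0.1, hj0⟩, fun y => ?_⟩
      have hyi : y.1 ≠ i := fun hyi => lt_irrefl _ (hyi ▸ y.2)
      have hmem : y.1 ∈ u := by simp [hudef, hyi]
      have := hun ⟨y.1, hmem⟩ y.2
      exact Subtype.ext (by simpa using congrArg Subtype.val this)
  -- transfer lemma
  have lemM : ∀ (φ : ℝ → ℝ≥0∞), Measurable φ → ∀ (P : Set (ℝ × (↥u → ℝ))), MeasurableSet P →
      ∫⁻ ω, φ (X ω) * P.indicator 1 (X ω, Y ω) ∂μ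
        = ∫⁻ t, φ t * ρ (Prod.mk t ⁻¹' P) ∂ν := by
    intro φ hφ P hP
    have hmeasP : Measurable (fun p : ℝ × (↥u → ℝ) => φ p.1 * P.indicator 1 p) :=
      (hφ.comp measurable_fst).mul (measurable_one.indicator hP)
    have step1 : ∫⁻ ω, φ (X ω) * P.indicator 1 (X ω, Y ω) ∂μ
        = ∫⁻ p, φ p.1 * P.indicator 1 p ∂(μ.map (fun ω => (X ω, Y ω))) := by
      rw [lintegral_map hmeasP (hXm.prodMk hYm)]
    rw [step1, hmap, lintegral_prod _ hmeasP.aemeasurable]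
    congr 1
    ext t
    have hsec : (fun y => P.indicator (1 : ℝ × (↥u → ℝ) → ℝ≥0∞) (t, y))
        = (Prod.mk t ⁻¹' P).indicator 1 := by
      ext y
      by_cases hy : (t, y) ∈ P <;> simp [Set.indicator_apply, hy]
    calc ∫⁻ y, φ t * P.indicator 1 (t, y) ∂ρ
        = φ t * ∫⁻ y, P.indicator 1 (t, y) ∂ρ := by
          exact lintegral_const_mul (φ t)
            (show Measurable fun y => P.indicator (1 : ℝ × (↥u → ℝ) → ℝ≥0∞) (t, y) from
              (measurable_one.indicator hP).comp measurable_prodMk_left)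
      _ = φ t * ρ (Prod.mk t ⁻¹' P) := by
          rw [show (fun y => P.indicator (1 : ℝ × (↥u → ℝ) → ℝ≥0∞) (t, y))
              = (Prod.mk t ⁻¹' P).indicator 1 from hsec,
            lintegral_indicator_one (measurable_prodMk_left hP)]
  -- the CDF-type functions
  set f : Fin m → ℝ → ℝ := fun j t => (μ (S j ⁻¹' Iic t)).toReal with hfdef
  set g : ℝ → ℝ := fun t => ∏ j ∈ u, f j t with hgdef
  set h : ℝ → ℝ := fun t => ∑ j ∈ u, (1 - f j t) * ∏ l ∈ u.erase j, f l t with hhdef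
  have hf0 : ∀ j t, 0 ≤ f j t := fun j t => ENNReal.toReal_nonneg
  have hf1 : ∀ j t, f j t ≤ 1 := by
    intro j t
    simp only [hfdef]
    rw [show (1:ℝ) = (1:ℝ≥0∞).toReal by simp]
    exact ENNReal.toReal_mono ENNReal.one_ne_top prob_le_one
  have hfmono : ∀ j, Monotone (f j) := by
    intro j s t hst
    exact ENNReal.toReal_mono (measure_ne_top μ _)
      (measure_mono (preimage_mono (Iic_subset_Iic.2 hst)))
  have hfm : ∀ j, Measurable (f j) := fun j => (hfmono j).measurable
  have hgm : Measurable g := Finset.measurable_prod _ fun j _ => hfm j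
  have hhm : Measurable h := Finset.measurable_sum _ fun j _ =>
    ((measurable_const.sub (hfm j)).mul (Finset.measurable_prod _ fun l _ => hfm l))
  have hg0 : ∀ t, 0 ≤ g t := fun t => Finset.prod_nonneg fun j _ => hf0 j t
  have hh0 : ∀ t, 0 ≤ h t := fun t => Finset.sum_nonneg fun j _ =>
    mul_nonneg (by linarith [hf1 j t]) (Finset.prod_nonneg fun l _ => hf0 l t)
  -- product formulas
  have hGt : ∀ t, ρ (Prod.mk t ⁻¹' PA) = ENNReal.ofReal (g t) := by
    intro t
    rw [hρdef, Measure.map_apply hYm (measurable_prodMk_left hPA)]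
    have hpre : Y ⁻¹' (Prod.mk t ⁻¹' PA) = ⋂ j ∈ u, S j ⁻¹' Iic t := by
      ext ω
      simp only [mem_preimage, hPAdef, mem_setOf_eq, mem_iInter, hYdef, mem_Iic]
      exact ⟨fun hj j hju => hj ⟨j, hju⟩, fun hj j => hj j.1 j.2⟩
    rw [hpre, h_indep.meas_biInter (fun j _ => ⟨Iic t, measurableSet_Iic, rfl⟩),
      hgdef, ENNReal.ofReal_prod_of_nonneg (fun j _ => hf0 j t)]
    exact Finset.prod_congr rfl fun j _ =>
      (ENNReal.ofReal_toReal (measure_ne_top μ _)).symm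
  have hHt : ∀ t, ρ (Prod.mk t ⁻¹' PB) = ENNReal.ofReal (h t) := by
    intro t
    rw [hρdef, Measure.map_apply hYm (measurable_prodMk_left hPB)]
    set E : Fin m → Set Ω := fun j => (S j ⁻¹' Ioi t) ∩ ⋂ l ∈ u.erase j, S l ⁻¹' Iic t
      with hEdef
    have hpre : Y ⁻¹' (Prod.mk t ⁻¹' PB) = ⋃ j ∈ u, E j := by
      ext ω
      simp only [mem_preimage, hPBdef, mem_setOf_eq, mem_iUnion, hYdef, hEdef,
        mem_inter_iff, mem_iInter, mem_Ioi, mem_Iic, ExistsUnique]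
      constructor
      · rintro ⟨⟨j, hju⟩, hj, hun⟩
        refine ⟨j, hju, hj, fun l hl => ?_⟩
        have hlu : l ∈ u := Finset.mem_of_mem_erase hl
        have hlj : l ≠ j := Finset.ne_of_mem_erase hl
        refine not_lt.1 fun hc => hlj ?_
        have := hun ⟨l, hlu⟩ hc
        simpa using congrArg Subtype.val this
      · rintro ⟨j, hju, hj, hun⟩
        refine ⟨⟨j, hju⟩, hj, fun l hl => ?_⟩
        by_contra hne
        have hlj : l.1 ≠ j := fun hh => hne (Subtype.ext hh)
        exact absurd hl (not_lt.2 (hun l.1 (Finset.mem_erase.2 ⟨hlj, l.2⟩)))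
    have hdisjE : (u : Set (Fin m)).PairwiseDisjoint E := by
      intro j hj j' hj' hne
      refine Set.disjoint_left.2 fun ω hωj hωj' => ?_
      have h1' : t < S j ω := hωj.1
      have h2' : S j ω ≤ t := by
        have := hωj'.2
        simp only [mem_iInter] at this
        exact this j (Finset.mem_erase.2 ⟨hne, hj⟩)
      exact absurd h1' (not_lt.2 h2')
    have hmeasE : ∀ j ∈ u, MeasurableSet (E j) := fun j _ =>
      ((hS j) measurableSet_Ioi).inter
        (MeasurableSet.biInter (Finset.countable_toSet _) fun l _ => (hS l) measurableSet_Iic)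
    rw [hpre, measure_biUnion_finset hdisjE hmeasE]
    have hEμ : ∀ j ∈ u, μ (E j) = ENNReal.ofReal ((1 - f j t) * ∏ l ∈ u.erase j, f l t) := by
      intro j hj
      have hEeq : E j = ⋂ l ∈ u, (fun l => if l = j then S j ⁻¹' Ioi t else S l ⁻¹' Iic t) l := by
        ext ω
        simp only [hEdef, mem_inter_iff, mem_iInter, mem_preimage]
        constructor
        · rintro ⟨hj1, hj2⟩ l hl
          by_cases hlj : l = j
          · simpa [hlj] using hj1
          · simpa [hlj] using hj2 l (Finset.mem_erase.2 ⟨hlj, hl⟩)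
        · intro hall
          refine ⟨by simpa using hall j hj, fun l hl => ?_⟩
          have := hall l (Finset.mem_of_mem_erase hl)
          simpa [Finset.ne_of_mem_erase hl] using this
      rw [hEeq, h_indep.meas_biInter (S := u)
        (s := fun l => if l = j then S j ⁻¹' Ioi t else S l ⁻¹' Iic t) ?_]
      · rw [← Finset.mul_prod_erase u _ hj]
        have hj' : μ (if j = j then S j ⁻¹' Ioi t else S j ⁻¹' Iic t)
            = ENNReal.ofReal (1 - f j t) := by
          rw [if_pos rfl]
          have : S j ⁻¹' Ioi t = (S j ⁻¹' Iic t)ᶜ := by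
            ext ω; simp [mem_Ioi, mem_Iic, not_le]
          rw [this, prob_compl_eq_one_sub ((hS j) measurableSet_Iic),
            ENNReal.ofReal_sub 1 (hf0 j t), ENNReal.ofReal_one,
            ENNReal.ofReal_toReal (measure_ne_top μ _)]
        rw [hj', ENNReal.ofReal_mul (by linarith [hf1 j t]),
          ENNReal.ofReal_prod_of_nonneg (fun l _ => hf0 l t)]
        congr 1
        refine Finset.prod_congr rfl fun l hl => ?_
        rw [if_neg (Finset.ne_of_mem_erase hl),
          ENNReal.ofReal_toReal (measure_ne_top μ _)]
      · intro l _
        by_cases hlj : l = j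
        · subst hlj; exact ⟨Ioi t, measurableSet_Ioi, by simp⟩
        · exact ⟨Iic t, measurableSet_Iic, by simp [hlj]⟩
    rw [hhdef, ENNReal.ofReal_sum_of_nonneg (fun j _ =>
      mul_nonneg (by linarith [hf1 j t]) (Finset.prod_nonneg fun l _ => hf0 l t))]
    exact Finset.sum_congr rfl hEμ
  -- measurability of events
  have hAm : MeasurableSet A := hApre ▸ (hXm.prodMk hYm) hPA
  have hBm : MeasurableSet B := hBpre ▸ (hXm.prodMk hYm) hPB
  have hindA : ∀ ω, PA.indicator (1 : (ℝ × (↥u → ℝ)) → ℝ≥0∞) (X ω, Y ω)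
      = A.indicator 1 ω := by
    intro ω
    by_cases hω : ω ∈ A
    · have hp : (X ω, Y ω) ∈ PA := by rw [hApre] at hω; exact hω
      simp [Set.indicator_of_mem, hp, hω]
    · have hp : (X ω, Y ω) ∉ PA := by rw [hApre] at hω; exact hω
      simp [Set.indicator_of_notMem, hp, hω]
  have hindB : ∀ ω, PB.indicator (1 : (ℝ × (↥u → ℝ)) → ℝ≥0∞) (X ω, Y ω)
      = B.indicator 1 ω := by
    intro ω
    by_cases hω : ω ∈ B
    · have hp : (X ω, Y ω) ∈ PB := by rw [hBpre] at hω; exact hω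
      simp [Set.indicator_of_mem, hp, hω]
    · have hp : (X ω, Y ω) ∉ PB := by rw [hBpre] at hω; exact hω
      simp [Set.indicator_of_notMem, hp, hω]
  -- integral identities
  set Ia := ∫⁻ t, ENNReal.ofReal t * ENNReal.ofReal (g t) ∂ν with hIadef
  set Ib := ∫⁻ t, ENNReal.ofReal t * ENNReal.ofReal (h t) ∂ν with hIbdef
  have haeq : μ A = ∫⁻ t, ENNReal.ofReal (g t) ∂ν := by
    have hM := lemM (fun _ => 1) measurable_const PA hPA
    simp only [one_mul] at hM
    calc μ A = ∫⁻ ω, A.indicator 1 ω ∂μ := (lintegral_indicator_one hAm).symm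
      _ = ∫⁻ ω, PA.indicator 1 (X ω, Y ω) ∂μ := by
          exact lintegral_congr fun ω => (hindA ω).symm
      _ = ∫⁻ t, ρ (Prod.mk t ⁻¹' PA) ∂ν := hM
      _ = ∫⁻ t, ENNReal.ofReal (g t) ∂ν := lintegral_congr fun t => hGt t
  have hbeq : μ B = ∫⁻ t, ENNReal.ofReal (h t) ∂ν := by
    have hM := lemM (fun _ => 1) measurable_const PB hPB
    simp only [one_mul] at hM
    calc μ B = ∫⁻ ω, B.indicator 1 ω ∂μ := (lintegral_indicator_one hBm).symm
      _ = ∫⁻ ω, PB.indicator 1 (X ω, Y ω) ∂μ := by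
          exact lintegral_congr fun ω => (hindB ω).symm
      _ = ∫⁻ t, ρ (Prod.mk t ⁻¹' PB) ∂ν := hM
      _ = ∫⁻ t, ENNReal.ofReal (h t) ∂ν := lintegral_congr fun t => hHt t
  have hrestr : ∀ (C : Set Ω), MeasurableSet C →
      ∫⁻ ω in C, ENNReal.ofReal (X ω) ∂μ
        = ∫⁻ ω, ENNReal.ofReal (X ω) * C.indicator 1 ω ∂μ := by
    intro C hC
    rw [← lintegral_indicator hC]
    exact lintegral_congr fun ω => by
      by_cases hω : ω ∈ C <;> simp [Set.indicator_apply, hω]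
  have hIaeq : ∫⁻ ω in A, ENNReal.ofReal (X ω) ∂μ = Ia := by
    have hM := lemM (fun t => ENNReal.ofReal t) ENNReal.measurable_ofReal PA hPA
    calc ∫⁻ ω in A, ENNReal.ofReal (X ω) ∂μ
        = ∫⁻ ω, ENNReal.ofReal (X ω) * A.indicator 1 ω ∂μ := hrestr A hAm
      _ = ∫⁻ ω, ENNReal.ofReal (X ω) * PA.indicator 1 (X ω, Y ω) ∂μ :=
          lintegral_congr fun ω => by rw [hindA ω]
      _ = ∫⁻ t, ENNReal.ofReal t * ρ (Prod.mk t ⁻¹' PA) ∂ν := hM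
      _ = Ia := lintegral_congr fun t => by rw [hGt t]
  have hIbeq : ∫⁻ ω in B, ENNReal.ofReal (X ω) ∂μ = Ib := by
    have hM := lemM (fun t => ENNReal.ofReal t) ENNReal.measurable_ofReal PB hPB
    calc ∫⁻ ω in B, ENNReal.ofReal (X ω) ∂μ
        = ∫⁻ ω, ENNReal.ofReal (X ω) * B.indicator 1 ω ∂μ := hrestr B hBm
      _ = ∫⁻ ω, ENNReal.ofReal (X ω) * PB.indicator 1 (X ω, Y ω) ∂μ :=
          lintegral_congr fun ω => by rw [hindB ω]
      _ = ∫⁻ t, ENNReal.ofReal t * ρ (Prod.mk t ⁻¹' PB) ∂ν := hM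
      _ = Ib := lintegral_congr fun t => by rw [hHt t]
  -- finiteness
  have hofg_le : ∀ t, ENNReal.ofReal (g t) ≤ 1 := fun t => (hGt t) ▸ prob_le_one
  have hofh_le : ∀ t, ENNReal.ofReal (h t) ≤ 1 := fun t => (hHt t) ▸ prob_le_one
  have hIfin : (∫⁻ t, ENNReal.ofReal t ∂ν) ≠ ⊤ := by
    rw [hνdef, lintegral_map ENNReal.measurable_ofReal hXm]
    exact h_int.lintegral_lt_top.ne
  have hIafin : Ia ≠ ⊤ := by
    refine ne_top_of_le_ne_top hIfin (le_trans (lintegral_mono fun t => ?_) le_rfl)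
    calc ENNReal.ofReal t * ENNReal.ofReal (g t) ≤ ENNReal.ofReal t * 1 :=
          mul_le_mul_right (hofg_le t) _
      _ = ENNReal.ofReal t := mul_one _
  have hIbfin : Ib ≠ ⊤ := by
    refine ne_top_of_le_ne_top hIfin (le_trans (lintegral_mono fun t => ?_) le_rfl)
    calc ENNReal.ofReal t * ENNReal.ofReal (h t) ≤ ENNReal.ofReal t * 1 :=
          mul_le_mul_right (hofh_le t) _
      _ = ENNReal.ofReal t := mul_one _
  -- the key ENNReal inequality via symmetrization over ν.prod ν
  have hbad : ν (Iio 0) = 0 := by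
    rw [hνdef, Measure.map_apply hXm measurableSet_Iio]
    have : X ⁻¹' Iio 0 = (∅ : Set Ω) := by
      ext ω; simp [not_lt.2 (hS_nonneg i ω)]; exact hS_nonneg i ω
    rw [this, measure_empty]
  have hae1 : ∀ᵐ p ∂ν.prod ν, 0 ≤ p.1 := by
    rw [ae_iff]
    have hset : {p : ℝ × ℝ | ¬ 0 ≤ p.1} = Iio 0 ×ˢ univ := by
      ext p; simp [not_le]
    rw [hset, Measure.prod_prod]
    simp [hbad]
  have hae2 : ∀ᵐ p ∂ν.prod ν, 0 ≤ p.2 := by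
    rw [ae_iff]
    have hset : {p : ℝ × ℝ | ¬ 0 ≤ p.2} = univ ×ˢ Iio 0 := by
      ext p; simp [not_le]
    rw [hset, Measure.prod_prod]
    simp [hbad]
  have hkey : ∀ s t : ℝ, s ≤ t → h t * g s ≤ g t * h s := by
    intro s t hst
    have hk := stmt6_key_real u (fun j => f j s) (fun j => f j t)
      (fun j => hf0 j s) (fun j => hfmono j hst) (fun j => hf1 j t)
    rw [mul_comm (h t) (g s)]
    exact hk
  have hptwise : ∀ᵐ p ∂ν.prod ν,
      ENNReal.ofReal p.1 * ENNReal.ofReal (h p.1) * ENNReal.ofReal (g p.2)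
        + ENNReal.ofReal p.2 * ENNReal.ofReal (h p.2) * ENNReal.ofReal (g p.1)
      ≤ ENNReal.ofReal p.1 * ENNReal.ofReal (g p.1) * ENNReal.ofReal (h p.2)
        + ENNReal.ofReal p.2 * ENNReal.ofReal (g p.2) * ENNReal.ofReal (h p.1) := by
    filter_upwards [hae1, hae2] with p hp1 hp2
    have E : ∀ (x y z : ℝ), 0 ≤ x → 0 ≤ y →
        ENNReal.ofReal x * ENNReal.ofReal y * ENNReal.ofReal z
          = ENNReal.ofReal (x * y * z) := by
      intro x y z hx hy
      rw [← ENNReal.ofReal_mul hx, ← ENNReal.ofReal_mul (mul_nonneg hx hy)]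
    rw [E _ _ _ hp1 (hh0 _), E _ _ _ hp2 (hh0 _), E _ _ _ hp1 (hg0 _), E _ _ _ hp2 (hg0 _),
      ← ENNReal.ofReal_add (mul_nonneg (mul_nonneg hp1 (hh0 _)) (hg0 _))
        (mul_nonneg (mul_nonneg hp2 (hh0 _)) (hg0 _)),
      ← ENNReal.ofReal_add (mul_nonneg (mul_nonneg hp1 (hg0 _)) (hh0 _))
        (mul_nonneg (mul_nonneg hp2 (hg0 _)) (hh0 _))]
    refine ENNReal.ofReal_le_ofReal ?_
    exact stmt6_cheb_real p.1 p.2 (g p.1) (g p.2) (h p.1) (h p.2)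
      (fun hst => hkey p.2 p.1 hst) (fun hts => hkey p.1 p.2 hts)
  have hmg : Measurable fun t => ENNReal.ofReal (g t) := hgm.ennreal_ofReal
  have hmh : Measurable fun t => ENNReal.ofReal (h t) := hhm.ennreal_ofReal
  have hmtg : Measurable fun t => ENNReal.ofReal t * ENNReal.ofReal (g t) :=
    (measurable_id.ennreal_ofReal).mul hmg
  have hmth : Measurable fun t => ENNReal.ofReal t * ENNReal.ofReal (h t) :=
    (measurable_id.ennreal_ofReal).mul hmh
  have hsplit : ∀ (φ ψ : ℝ → ℝ≥0∞), Measurable φ → Measurable ψ →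
      ∫⁻ p : ℝ × ℝ, φ p.1 * ψ p.2 ∂(ν.prod ν) = (∫⁻ t, φ t ∂ν) * (∫⁻ t, ψ t ∂ν) :=
    fun φ ψ hφ hψ => lintegral_prod_mul hφ.aemeasurable hψ.aemeasurable
  have hmain : Ib * μ A ≤ Ia * μ B := by
    have e1 : ∫⁻ p : ℝ × ℝ, ENNReal.ofReal p.1 * ENNReal.ofReal (h p.1)
        * ENNReal.ofReal (g p.2) ∂(ν.prod ν) = Ib * μ A := by
      rw [haeq]
      exact hsplit (fun t => ENNReal.ofReal t * ENNReal.ofReal (h t))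
        (fun t => ENNReal.ofReal (g t)) hmth hmg
    have e2 : ∫⁻ p : ℝ × ℝ, ENNReal.ofReal p.2 * ENNReal.ofReal (h p.2)
        * ENNReal.ofReal (g p.1) ∂(ν.prod ν) = μ A * Ib := by
      rw [haeq, show (fun p : ℝ × ℝ => ENNReal.ofReal p.2 * ENNReal.ofReal (h p.2)
          * ENNReal.ofReal (g p.1))
        = fun p : ℝ × ℝ => ENNReal.ofReal (g p.1) * (ENNReal.ofReal p.2
          * ENNReal.ofReal (h p.2)) from funext fun p => by ring]
      exact hsplit (fun t => ENNReal.ofReal (g t))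
        (fun t => ENNReal.ofReal t * ENNReal.ofReal (h t)) hmg hmth
    have e3 : ∫⁻ p : ℝ × ℝ, ENNReal.ofReal p.1 * ENNReal.ofReal (g p.1)
        * ENNReal.ofReal (h p.2) ∂(ν.prod ν) = Ia * μ B := by
      rw [hbeq]
      exact hsplit (fun t => ENNReal.ofReal t * ENNReal.ofReal (g t))
        (fun t => ENNReal.ofReal (h t)) hmtg hmh
    have e4 : ∫⁻ p : ℝ × ℝ, ENNReal.ofReal p.2 * ENNReal.ofReal (g p.2)
        * ENNReal.ofReal (h p.1) ∂(ν.prod ν) = μ B * Ia := by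
      rw [hbeq, show (fun p : ℝ × ℝ => ENNReal.ofReal p.2 * ENNReal.ofReal (g p.2)
          * ENNReal.ofReal (h p.1))
        = fun p : ℝ × ℝ => ENNReal.ofReal (h p.1) * (ENNReal.ofReal p.2
          * ENNReal.ofReal (g p.2)) from funext fun p => by ring]
      exact hsplit (fun t => ENNReal.ofReal (h t))
        (fun t => ENNReal.ofReal t * ENNReal.ofReal (g t)) hmh hmtg
    have hm1 : Measurable fun p : ℝ × ℝ => ENNReal.ofReal p.1 * ENNReal.ofReal (h p.1)
        * ENNReal.ofReal (g p.2) :=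
      ((measurable_fst.ennreal_ofReal).mul ((hhm.comp measurable_fst).ennreal_ofReal)).mul
        ((hgm.comp measurable_snd).ennreal_ofReal)
    have hm2 : Measurable fun p : ℝ × ℝ => ENNReal.ofReal p.1 * ENNReal.ofReal (g p.1)
        * ENNReal.ofReal (h p.2) :=
      ((measurable_fst.ennreal_ofReal).mul ((hgm.comp measurable_fst).ennreal_ofReal)).mul
        ((hhm.comp measurable_snd).ennreal_ofReal)
    have hle := lintegral_mono_ae hptwise
    rw [lintegral_add_left hm1, lintegral_add_left hm2, e1, e2, e3, e4,
      mul_comm (μ A) Ib, mul_comm (μ B) Ia, ← two_mul, ← two_mul] at hle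
    exact (ENNReal.mul_le_mul_iff_right (by norm_num) (by norm_num)).1 hle
  -- convert to the real-valued goal
  have hXae : 0 ≤ᵐ[μ.restrict A] X := ae_of_all _ fun ω => hS_nonneg i ω
  have hcondint : ∀ (C : Set Ω),
      ∫ ω, X ω ∂(μ[|C]) = (μ C)⁻¹.toReal * (∫⁻ ω in C, ENNReal.ofReal (X ω) ∂μ).toReal := by
    intro C
    rw [ProbabilityTheory.cond, integral_smul_measure]
    congr 1
    rw [integral_eq_lintegral_of_nonneg_ae (ae_of_all _ fun ω => hS_nonneg i ω)
      hXm.aestronglyMeasurable]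
  rw [ge_iff_le, hcondint A, hcondint B, hIaeq, hIbeq]
  have hA0 : (μ A).toReal ≠ 0 := (ENNReal.toReal_pos h1.ne' (measure_ne_top μ A)).ne'
  have hB0 : (μ B).toReal ≠ 0 := (ENNReal.toReal_pos h2.ne' (measure_ne_top μ B)).ne'
  have hApos : 0 < (μ A).toReal := ENNReal.toReal_pos h1.ne' (measure_ne_top μ A)
  have hBpos : 0 < (μ B).toReal := ENNReal.toReal_pos h2.ne' (measure_ne_top μ B)
  have hmain' : Ib.toReal * (μ A).toReal ≤ Ia.toReal * (μ B).toReal := by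
    have := ENNReal.toReal_mono (ENNReal.mul_ne_top hIafin (measure_ne_top μ B)) hmain
    rwa [ENNReal.toReal_mul, ENNReal.toReal_mul] at this
  rw [ENNReal.toReal_inv, ENNReal.toReal_inv, inv_mul_eq_div, inv_mul_eq_div,
    div_le_div_iff₀ hBpos hApos]
  exact hmain'
end
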